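/- Let n_t be a nonincreasing (in t) ℕ-valued stochastic process and let E[n_t] be its (nonincreasing, right-continuous) expectation, with E[n_{t₀}] > 0. For any ε ∈ (0,1) there exists a finite set of points t₀ > t₁ > … > t_k = 0 in [0, t₀] such that the event {∀ i : n_{tᵢ} ≤ (1/(1-ε))·E[n_{tᵢ}]} is contained in the event {∀ t ∈ [0,t₀] : n_t ≤ (1/(1-ε))²·E[n_t]}. -/

import Mathlib

/-! With `c = 1/(1-ε)`, start at `0` and put the next time point at the first time where `e` has
dropped to `1/c` of its value at the current point; right-continuity of `e` makes the drop
happen at that time itself. Each step divides `e` by at least `c`, so since `e t₀ > 0` the points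
reach `t₀` after finitely many steps. Before the next point `e` stays within the factor `c` of its
value at the current point `s`, so for `s ≤ t` below the next point,
`n_t ≤ n_s ≤ c e(s) ≤ c² e(t)`. -/

open Set

theorem Antitone.isClosed_setOf_le {α β : Type*} [TopologicalSpace α] [LinearOrder α]
    [TopologicalSpace β] [LinearOrder β] [OrderClosedTopology β] {f : α → β} (hf : Antitone f)
    (hrc : ∀ t, ContinuousWithinAt f (Ici t) t) (y : β) : IsClosed {t | f t ≤ y} := by
  refine isClosed_of_closure_subset fun x hx => ?_
  by_cases hleft : ∃ s ∈ {t | f t ≤ y}, s ≤ x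
  · obtain ⟨s, hs, hsx⟩ := hleft
    exact (hf hsx).trans hs
  · push Not at hleft
    exact ContinuousWithinAt.closure_le hx ((hrc x).mono fun s hs => (hleft s hs).le)
      continuousWithinAt_const fun s hs => hs

theorem Antitone.exists_checkpoints_of_lt_pow {e : ℝ → ℝ} (he : Antitone e)
    (hrc : ∀ t, ContinuousWithinAt e (Ici t) t) {c : ℝ} (hc : 0 < c) {t₀ : ℝ} (n : ℕ) :
    ∀ a ≤ t₀, e a < c ^ n * e t₀ → ∃ S : Finset ℝ, a ∈ S ∧ t₀ ∈ S ∧ (S : Set ℝ) ⊆ Icc a t₀ ∧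
      ∀ t ∈ Icc a t₀, ∃ s ∈ S, s ≤ t ∧ e s ≤ c * e t := by
  induction n with
  | zero =>
    intro a ha hlt
    rw [pow_zero, one_mul] at hlt
    exact absurd (he ha) hlt.not_ge
  | succ n ih =>
    intro a ha hlt
    set B := Icc a t₀ ∩ {t | e t ≤ e a / c}
    have hBbdd : BddBelow B := ⟨a, fun t ht => ht.1.1⟩
    have hnotB : ∀ t ∈ Icc a t₀, t ∉ B → e a ≤ c * e t := fun t ht htB =>
      ((div_lt_iff₀' hc).mp (not_le.mp fun h => htB ⟨ht, h⟩)).le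
    by_cases hB : B.Nonempty
    · obtain ⟨⟨hab, hbt₀⟩, hbe⟩ : sInf B ∈ B :=
        (isClosed_Icc.inter (he.isClosed_setOf_le hrc _)).csInf_mem hB hBbdd
      have hlt' : e (sInf B) < c ^ n * e t₀ :=
        hbe.trans_lt <| (div_lt_iff₀' hc).mpr (by rwa [← mul_assoc, ← pow_succ'])
      obtain ⟨S, -, ht₀S, hSsub, hcov⟩ := ih (sInf B) hbt₀ hlt'
      refine ⟨insert a S, Finset.mem_insert_self _ _, Finset.mem_insert_of_mem ht₀S, ?_, ?_⟩
      · rw [Finset.coe_insert]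
        exact insert_subset ⟨le_rfl, ha⟩ (hSsub.trans (Icc_subset_Icc_left hab))
      · intro t ht
        rcases lt_or_ge t (sInf B) with htb | hbt
        · exact ⟨a, Finset.mem_insert_self _ _, ht.1, hnotB t ht (notMem_of_lt_csInf htb hBbdd)⟩
        · obtain ⟨s, hs, hst, hes⟩ := hcov t ⟨hbt, ht.2⟩
          exact ⟨s, Finset.mem_insert_of_mem hs, hst, hes⟩
    · refine ⟨{a, t₀}, by simp, by simp, ?_, fun t ht => ⟨a, by simp, ht.1, ?_⟩⟩
      · simp [insert_subset_iff, ha]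
      · exact hnotB t ht fun htB => hB ⟨t, htB⟩

theorem Finset.exists_strictAnti_fin_of_subset_Icc {α : Type*} [LinearOrder α] (S : Finset α)
    {a b : α} (ha : a ∈ S) (hb : b ∈ S) (hS : (S : Set α) ⊆ Set.Icc a b) :
    ∃ (k : ℕ) (ts : Fin (k + 1) → α), StrictAnti ts ∧ ts 0 = b ∧ ts (Fin.last k) = a ∧
      ∀ s ∈ S, ∃ i, ts i = s := by
  have hk : S.card = S.card - 1 + 1 := (Nat.succ_pred_eq_of_pos (Finset.card_pos.mpr ⟨a, ha⟩)).symm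
  set ts := fun i => S.orderEmbOfFin hk (Fin.rev i)
  have hts : StrictAnti ts := (S.orderEmbOfFin hk).strictMono.comp_strictAnti Fin.rev_strictAnti
  have hsurj : ∀ s ∈ S, ∃ i, ts i = s := fun s hs => by
    obtain ⟨i, hi⟩ : s ∈ Set.range (S.orderEmbOfFin hk) := by rwa [Finset.range_orderEmbOfFin]
    exact ⟨Fin.rev i, by simp only [ts, Fin.rev_rev, hi]⟩
  have hmem : ∀ i, ts i ∈ Set.Icc a b := fun i => hS <| by
    rw [← Finset.range_orderEmbOfFin S hk]
    exact Set.mem_range_self _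
  obtain ⟨i, hi⟩ := hsurj b hb
  obtain ⟨j, hj⟩ := hsurj a ha
  refine ⟨_, ts, hts, ?_, ?_, hsurj⟩
  · exact le_antisymm (hmem 0).2 (hi ▸ hts.antitone (Fin.zero_le i))
  · exact le_antisymm (hj ▸ hts.antitone (Fin.le_last j)) (hmem _).1

open MeasureTheory

theorem finite_time_points_general
    {Ω : Type*}
    (nt : ℝ → Ω → ℕ)
    (hpath : ∀ ω, Antitone fun t => nt t ω)
    (e : ℝ → ℝ)
    (hemono : Antitone e)
    (herc : ∀ t : ℝ, ContinuousWithinAt e (Set.Ici t) t)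
    (t₀ : ℝ) (ht₀ : 0 ≤ t₀) (hpos : 0 < e t₀)
    (ε : ℝ) (hε : ε ∈ Set.Ioo (0 : ℝ) 1) :
    ∃ (k : ℕ) (ts : Fin (k + 1) → ℝ),
      (StrictAnti ts) ∧ ts 0 = t₀ ∧ ts (Fin.last k) = 0 ∧
      {ω | ∀ i, (nt (ts i) ω : ℝ) ≤ (1 / (1 - ε)) * e (ts i)} ⊆
        {ω | ∀ t ∈ Set.Icc (0 : ℝ) t₀, (nt t ω : ℝ) ≤ (1 / (1 - ε)) ^ 2 * e t} := by
  have hc : 1 < 1 / (1 - ε) := by rw [lt_div_iff₀ (by linarith [hε.2])]; linarith [hε.1]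
  obtain ⟨n, hn⟩ := pow_unbounded_of_one_lt (e 0 / e t₀) hc
  obtain ⟨S, h0S, ht₀S, hSsub, hcover⟩ := hemono.exists_checkpoints_of_lt_pow herc
    (zero_lt_one.trans hc) n 0 ht₀ ((div_lt_iff₀ hpos).mp hn)
  obtain ⟨k, ts, hanti, hfirst, hlast, hsurj⟩ := S.exists_strictAnti_fin_of_subset_Icc h0S ht₀S hSsub
  refine ⟨k, ts, hanti, hfirst, hlast, fun ω hω t ht => ?_⟩
  obtain ⟨s, hs, hst, hes⟩ := hcover t ht
  obtain ⟨i, rfl⟩ := hsurj s hs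
  calc (nt t ω : ℝ) ≤ nt (ts i) ω := Nat.cast_le.mpr (hpath ω hst)
    _ ≤ 1 / (1 - ε) * e (ts i) := hω i
    _ ≤ 1 / (1 - ε) * (1 / (1 - ε) * e t) := by gcongr
    _ = (1 / (1 - ε)) ^ 2 * e t := by ring

/-- Lemma `finiteTimePoints`: for a pathwise nonincreasing survivor-count process `nt`
with nonincreasing right-continuous expectation `e`, and any `ε ∈ (0,1)`, there are
finitely many time points `t₀ = ts 0 > ts 1 > … > ts k = 0` such that control of the
survivor count by `(1/(1-ε))·e` at these points implies control by `(1/(1-ε))²·e`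
on all of `[0, t₀]`. -/
theorem finite_time_points
    {Ω : Type*} [MeasurableSpace Ω] (P : Measure Ω) [IsProbabilityMeasure P]
    (nt : ℝ → Ω → ℕ)
    (hpath : ∀ ω, Antitone fun t => nt t ω)
    (e : ℝ → ℝ)
    (he : ∀ t, e t = ∫ ω, (nt t ω : ℝ) ∂P)
    (hemono : Antitone e)
    (herc : ∀ t : ℝ, ContinuousWithinAt e (Set.Ici t) t)
    (t₀ : ℝ) (ht₀ : 0 ≤ t₀) (hpos : 0 < e t₀)
    (ε : ℝ) (hε : ε ∈ Set.Ioo (0 : ℝ) 1) :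
    ∃ (k : ℕ) (ts : Fin (k + 1) → ℝ),
      (StrictAnti ts) ∧ ts 0 = t₀ ∧ ts (Fin.last k) = 0 ∧
      {ω | ∀ i, (nt (ts i) ω : ℝ) ≤ (1 / (1 - ε)) * e (ts i)} ⊆
        {ω | ∀ t ∈ Set.Icc (0 : ℝ) t₀, (nt t ω : ℝ) ≤ (1 / (1 - ε)) ^ 2 * e t} :=
  finite_time_points_general nt hpath e hemono herc t₀ ht₀ hpos ε hε
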